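/- Let C = c₀₊ be the positive cone of the space c₀ of real sequences converging to zero, with the supremum norm, and let T : C → C be the left (backward) shift, T(x_1, x_2, x_3, ...) = (x_2, x_3, x_4, ...). Then r(T) = 1, σ_p(T) = [0,1), and σ_ap(T) = [0,1], where σ_p(T) = {t ≥ 0 : Tx = tx for some x ∈ C with ‖x‖ = 1}. -/

import Mathlib

open Filter Topology Bornology Pointwise

variable {X : Type*}

section ConeDefs

variable [NormedAddCommGroup X] [NormedSpace ℝ X]

/-- `C` is a cone (with vertex `0`): `tC ⊆ C` for all `t ≥ 0`. -/
def IsCone (C : Set X) : Prop :=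
  ∀ t : ℝ, 0 ≤ t → ∀ x ∈ C, t • x ∈ C

/-- `T` is positively homogeneous (of degree 1) on `C`. -/
def PosHomOn (C : Set X) (T : X → X) : Prop :=
  ∀ t : ℝ, 0 ≤ t → ∀ x ∈ C, T (t • x) = t • T x

/-- `T` is Lipschitz on `C`. -/
def LipschitzOnCone (C : Set X) (T : X → X) : Prop :=
  ∃ L : ℝ, 0 < L ∧ ∀ x ∈ C, ∀ y ∈ C, ‖T x - T y‖ ≤ L * ‖x - y‖

/-- `T` is bounded on `C`: the set of ratios `‖T x‖/‖x‖` (over nonzero `x ∈ C`)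
is bounded above. -/
def BoundedOnCone (C : Set X) (T : X → X) : Prop :=
  BddAbove {r : ℝ | ∃ x ∈ C, x ≠ 0 ∧ r = ‖T x‖ / ‖x‖}

/-- The norm `‖T‖ = sup {‖T x‖/‖x‖ : x ∈ C, x ≠ 0}` of `T` on the cone `C`. -/
noncomputable def coneNorm (C : Set X) (T : X → X) : ℝ :=
  sSup {r : ℝ | ∃ x ∈ C, x ≠ 0 ∧ r = ‖T x‖ / ‖x‖}

/-- The Bonsall cone spectral radius `r(T) = lim_n ‖Tⁿ‖^{1/n} = inf_n ‖Tⁿ‖^{1/n}`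
of `T` on the cone `C` (the limit exists and equals the infimum by submultiplicativity). -/
noncomputable def coneRadius (C : Set X) (T : X → X) : ℝ :=
  ⨅ n : ℕ, (coneNorm C (T^[n + 1])) ^ ((1 : ℝ) / (n + 1))

/-- The local cone spectral radius `r_x(T) = limsup_n ‖Tⁿ x‖^{1/n}`. -/
noncomputable def localRadius (C : Set X) (T : X → X) (x : X) : ℝ :=
  Filter.limsup (fun n : ℕ => ‖T^[n] x‖ ^ ((1 : ℝ) / n)) Filter.atTop

/-- The approximate point spectrum of `T` on the cone `C`: all `s ≥ 0` with
`inf {‖T x - s x‖ : x ∈ C, ‖x‖ = 1} = 0`. -/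
def apSpectrum (C : Set X) (T : X → X) : Set ℝ :=
  {s : ℝ | 0 ≤ s ∧ ∀ ε : ℝ, 0 < ε → ∃ x ∈ C, ‖x‖ = 1 ∧ ‖T x - s • x‖ < ε}

end ConeDefs

/-!
The shift does not increase norms, so `r(T) ≤ 1` and `σ_ap(T) ⊆ [0, 1]`. For `0 ≤ t < 1` the
geometric sequence `(tⁱ)` is a unit eigenvector in `c₀₊`, while for `t ≥ 1` an eigenvector
`xᵢ = tⁱ x₀` cannot tend to `0`; hence `σ_p(T) = [0, 1)`. Since eigenvalues are bounded by `r(T)`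
and the closure of the point spectrum lies in `σ_ap(T)`, taking closures of `[0, 1)` gives
`r(T) ≥ 1` and `σ_ap(T) ⊇ [0, 1]`.
-/

open scoped ZeroAtInfty

namespace ZeroAtInftyContinuousMap

variable {α β : Type*} [TopologicalSpace α] [SeminormedAddCommGroup β]

theorem norm_apply_le (f : C₀(α, β)) (a : α) : ‖f a‖ ≤ ‖f‖ :=
  norm_toBCF_eq_norm (f := f) ▸ f.toBCF.norm_coe_le_norm a

theorem norm_le_of_forall {f : C₀(α, β)} {c : ℝ} (hc : 0 ≤ c) (h : ∀ a, ‖f a‖ ≤ c) :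
    ‖f‖ ≤ c :=
  norm_toBCF_eq_norm (f := f) ▸ (BoundedContinuousFunction.norm_le hc).2 h

end ZeroAtInftyContinuousMap

theorem norm_iterate_le_of_forall_norm_le {E : Type*} [Norm E] {f : E → E}
    (h : ∀ x, ‖f x‖ ≤ ‖x‖) (n : ℕ) (x : E) : ‖f^[n] x‖ ≤ ‖x‖ := by
  induction n with
  | zero => rfl
  | succ n ih => exact Function.iterate_succ_apply' f n x ▸ (h _).trans ih

section ConeNorm

variable [NormedAddCommGroup X] {C : Set X} {T : X → X}

theorem coneNorm_nonneg (C : Set X) (T : X → X) : 0 ≤ coneNorm C T :=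
  Real.sSup_nonneg fun _ ⟨_, _, _, hr⟩ => hr ▸ by positivity

theorem coneNorm_le_of_forall {c : ℝ} (hc : 0 ≤ c) (h : ∀ x ∈ C, ‖T x‖ ≤ c * ‖x‖) :
    coneNorm C T ≤ c :=
  Real.sSup_le (fun _ ⟨x, hx, _, hr⟩ => hr ▸ div_le_of_le_mul₀ (norm_nonneg x) hc (h x hx))
    hc

theorem boundedOnCone_of_forall {c : ℝ} (h : ∀ x ∈ C, ‖T x‖ ≤ c * ‖x‖) : BoundedOnCone C T :=
  ⟨c, fun _ ⟨x, hx, hx0, hr⟩ => hr ▸ (div_le_iff₀ (norm_pos_iff.2 hx0)).2 (h x hx)⟩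

theorem norm_div_norm_le_coneNorm (hT : BoundedOnCone C T) {x : X} (hx : x ∈ C) (hx0 : x ≠ 0) :
    ‖T x‖ / ‖x‖ ≤ coneNorm C T :=
  le_csSup hT ⟨x, hx, hx0, rfl⟩

theorem coneRadius_le {c : ℝ} (hc : 0 ≤ c) (h : ∀ x ∈ C, ‖T x‖ ≤ c * ‖x‖) :
    coneRadius C T ≤ c := by
  have hbdd : BddBelow (Set.range fun n : ℕ => coneNorm C (T^[n + 1]) ^ ((1 : ℝ) / (n + 1))) :=
    ⟨0, Set.forall_mem_range.2 fun n => Real.rpow_nonneg (coneNorm_nonneg _ _) _⟩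
  refine (ciInf_le hbdd 0).trans ?_
  simpa using coneNorm_le_of_forall hc h

end ConeNorm

section ConeSpectra

variable [NormedAddCommGroup X] [NormedSpace ℝ X] {C : Set X} {T : X → X}

def pointSpectrum (C : Set X) (T : X → X) : Set ℝ :=
  {t : ℝ | 0 ≤ t ∧ ∃ x ∈ C, ‖x‖ = 1 ∧ T x = t • x}

theorem iterate_eq_pow_smul (hT : PosHomOn C T) {x : X} (hx : x ∈ C) {t : ℝ} (ht : 0 ≤ t)
    (hxt : T x = t • x) (n : ℕ) : T^[n] x = t ^ n • x := by
  induction n with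
  | zero => simp
  | succ n ih =>
    rw [Function.iterate_succ_apply', ih, hT _ (pow_nonneg ht n) x hx, hxt, smul_smul, pow_succ]

theorem le_coneRadius_of_mem_pointSpectrum (hT : PosHomOn C T)
    (hbdd : ∀ n, BoundedOnCone C (T^[n + 1])) {t : ℝ} (ht : t ∈ pointSpectrum C T) :
    t ≤ coneRadius C T := by
  obtain ⟨ht0, x, hx, hx1, hxt⟩ := ht
  have hx0 : x ≠ 0 := norm_ne_zero_iff.1 (hx1 ▸ one_ne_zero)
  refine le_ciInf fun n => ?_
  have hpow : t ^ (n + 1) ≤ coneNorm C (T^[n + 1]) := by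
    simpa [iterate_eq_pow_smul hT hx ht0 hxt, norm_smul, hx1, abs_of_nonneg ht0] using
      norm_div_norm_le_coneNorm (hbdd n) hx hx0
  calc t = (t ^ (n + 1)) ^ ((1 : ℝ) / (n + 1)) := by
        rw [one_div]; exact_mod_cast (Real.pow_rpow_inv_natCast ht0 n.succ_ne_zero).symm
    _ ≤ coneNorm C (T^[n + 1]) ^ ((1 : ℝ) / (n + 1)) :=
        Real.rpow_le_rpow (by positivity) hpow (by positivity)

theorem apSpectrum_subset_Icc {c : ℝ} (h : ∀ x ∈ C, ‖T x‖ ≤ c * ‖x‖) :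
    apSpectrum C T ⊆ Set.Icc 0 c := by
  refine fun s ⟨hs0, hs⟩ => ⟨hs0, not_lt.1 fun hcs => ?_⟩
  obtain ⟨x, hx, hx1, hlt⟩ := hs (s - c) (sub_pos.2 hcs)
  have := norm_sub_norm_le (s • x) (T x)
  have hTx := h x hx
  rw [norm_sub_rev, norm_smul, Real.norm_of_nonneg hs0, hx1] at this
  rw [hx1, mul_one] at hTx
  linarith

theorem closure_pointSpectrum_subset_apSpectrum :
    closure (pointSpectrum C T) ⊆ apSpectrum C T := by
  intro s hs
  have hs0 : 0 ≤ s := closure_minimal (fun t ht => ht.1) isClosed_Ici hs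
  refine ⟨hs0, fun ε hε => ?_⟩
  obtain ⟨t, ⟨-, x, hx, hx1, hxt⟩, hts⟩ := Metric.mem_closure_iff.1 hs ε hε
  refine ⟨x, hx, hx1, ?_⟩
  rwa [hxt, ← sub_smul, norm_smul, hx1, mul_one, Real.norm_eq_abs, abs_sub_comm]

end ConeSpectra

noncomputable def geometricC0 (r : ℝ) (hr : |r| < 1) : C₀(ℕ, ℝ) where
  toFun i := r ^ i
  continuous_toFun := continuous_of_discreteTopology
  zero_at_infty' := (cocompact_eq_atTop (α := ℕ)) ▸ tendsto_pow_atTop_nhds_zero_of_abs_lt_one hr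

theorem geometricC0_apply {r : ℝ} (hr : |r| < 1) (i : ℕ) : geometricC0 r hr i = r ^ i := rfl

theorem norm_geometricC0 {r : ℝ} (hr : |r| < 1) : ‖geometricC0 r hr‖ = 1 := by
  refine le_antisymm (ZeroAtInftyContinuousMap.norm_le_of_forall zero_le_one fun i => ?_) ?_
  · simpa [geometricC0_apply] using pow_le_one₀ (abs_nonneg r) hr.le
  · simpa [geometricC0_apply] using (geometricC0 r hr).norm_apply_le 0

section BackwardShift

variable (T : C₀(ℕ, ℝ) → C₀(ℕ, ℝ))

theorem norm_shift_le (hT : ∀ x i, T x i = x (i + 1)) (x : C₀(ℕ, ℝ)) : ‖T x‖ ≤ ‖x‖ :=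
  ZeroAtInftyContinuousMap.norm_le_of_forall (norm_nonneg x) fun i =>
    hT x i ▸ x.norm_apply_le (i + 1)

theorem posHomOn_shift (hT : ∀ x i, T x i = x (i + 1)) (C : Set C₀(ℕ, ℝ)) : PosHomOn C T :=
  fun t _ x _ => by ext i; simp [hT]

theorem shift_geometricC0 (hT : ∀ x i, T x i = x (i + 1)) {r : ℝ} (hr : |r| < 1) :
    T (geometricC0 r hr) = r • geometricC0 r hr := by
  ext i
  simp [hT, geometricC0_apply, pow_succ, mul_comm]

theorem apply_eq_pow_mul_of_shift_eq_smul (hT : ∀ x i, T x i = x (i + 1)) {x : C₀(ℕ, ℝ)}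
    {t : ℝ} (hxt : T x = t • x) (i : ℕ) : x i = t ^ i * x 0 := by
  induction i with
  | zero => simp
  | succ i ih =>
    rw [← hT, hxt, ZeroAtInftyContinuousMap.smul_apply, smul_eq_mul, ih, pow_succ]
    ring

theorem lt_one_of_shift_eq_smul (hT : ∀ x i, T x i = x (i + 1)) {x : C₀(ℕ, ℝ)}
    (hx : ∀ i, 0 ≤ x i) (hx0 : x ≠ 0) {t : ℝ} (hxt : T x = t • x) : t < 1 := by
  have hpow := apply_eq_pow_mul_of_shift_eq_smul T hT hxt
  have hx0pos : 0 < x 0 := by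
    refine (hx 0).lt_of_ne' fun h0 => hx0 ?_
    ext i
    simp [hpow i, h0]
  refine not_le.1 fun ht => hx0pos.not_ge ?_
  have hlim : Tendsto x atTop (𝓝 0) := (cocompact_eq_atTop (α := ℕ)) ▸ zero_at_infty x
  refine ge_of_tendsto' hlim fun i => ?_
  rw [hpow i]
  exact le_mul_of_one_le_left hx0pos.le (one_le_pow₀ ht)

theorem pointSpectrum_shift (hT : ∀ x i, T x i = x (i + 1)) :
    pointSpectrum {x : C₀(ℕ, ℝ) | ∀ i, 0 ≤ x i} T = Set.Ico 0 1 := by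
  ext t
  refine ⟨fun ⟨ht0, x, hx, hx1, hxt⟩ => ⟨ht0, ?_⟩, fun ⟨ht0, ht1⟩ => ?_⟩
  · exact lt_one_of_shift_eq_smul T hT hx (norm_ne_zero_iff.1 (hx1 ▸ one_ne_zero)) hxt
  · have hr : |t| < 1 := abs_lt.2 ⟨by linarith, ht1⟩
    exact ⟨ht0, geometricC0 t hr, fun i => pow_nonneg ht0 i, norm_geometricC0 hr,
      shift_geometricC0 T hT hr⟩

end BackwardShift

/-- **Example 3.20 (continued).** Let `C = c₀₊` be the positive cone of the space `c₀`
of real null sequences with the supremum norm, and let `T : C → C` be the left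
(backward) shift. Then `r(T) = 1`, `σ_p(T) = [0,1)` and `σ_ap(T) = [0,1]`, where
`σ_p(T) = {t ≥ 0 : T x = t x for some x ∈ C, ‖x‖ = 1}`. -/
theorem backwardShift_c0_spectra
    (T : ZeroAtInftyContinuousMap ℕ ℝ → ZeroAtInftyContinuousMap ℕ ℝ)
    (hT : ∀ (x : ZeroAtInftyContinuousMap ℕ ℝ) (i : ℕ), (T x) i = x (i + 1)) :
    coneRadius {x : ZeroAtInftyContinuousMap ℕ ℝ | ∀ i, 0 ≤ x i} T = 1 ∧
    {t : ℝ | 0 ≤ t ∧ ∃ x : ZeroAtInftyContinuousMap ℕ ℝ,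
        (∀ i, 0 ≤ x i) ∧ ‖x‖ = 1 ∧ T x = t • x} = Set.Ico (0 : ℝ) 1 ∧
    apSpectrum {x : ZeroAtInftyContinuousMap ℕ ℝ | ∀ i, 0 ≤ x i} T = Set.Icc (0 : ℝ) 1 := by
  set C : Set C₀(ℕ, ℝ) := {x | ∀ i, 0 ≤ x i}
  have hle : ∀ x ∈ C, ‖T x‖ ≤ 1 * ‖x‖ := fun x _ => by simpa using norm_shift_le T hT x
  have hbdd (n : ℕ) : BoundedOnCone C (T^[n + 1]) := boundedOnCone_of_forall (c := 1)
    fun x _ => by simpa using norm_iterate_le_of_forall_norm_le (norm_shift_le T hT) (n + 1) x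
  have hσp : pointSpectrum C T = Set.Ico 0 1 := pointSpectrum_shift T hT
  have hclosure : closure (pointSpectrum C T) = Set.Icc 0 1 := by
    rw [hσp, closure_Ico zero_ne_one]
  have hradius : Set.Icc (0 : ℝ) 1 ⊆ Set.Iic (coneRadius C T) :=
    hclosure ▸ closure_minimal (fun t ht => le_coneRadius_of_mem_pointSpectrum
      (posHomOn_shift T hT C) hbdd ht) isClosed_Iic
  exact ⟨le_antisymm (coneRadius_le zero_le_one hle) (hradius ⟨zero_le_one, le_rfl⟩), hσp,
    (apSpectrum_subset_Icc hle).antisymm (hclosure ▸ closure_pointSpectrum_subset_apSpectrum)⟩
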